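/- Let q^{(n)} denote the empirical attribute distribution of the sample after n steps of a process that at each step adds one node with attribute value argmin_i q^{(n)}_i (breaking ties by lowest index), starting from any initial sample over r attribute values. Then q^{(n)} converges to the uniform distribution (1/r, …, 1/r) as n → ∞, and moreover max_i q^{(n)}_i - min_i q^{(n)}_i → 0. -/
import Mathlib


open Finset Filter

/-- The empirical distribution of the balanced (BAL) sampling process—which at each
step adds one node whose attribute value currently has minimal empirical
probability (ties broken by lowest index)—converges to the uniform distribution on
the `r` attribute values, and the gap between the maximal and minimal empirical
probabilities tends to `0`. -/
theorem bal_empirical_tendsto_uniform (r : ℕ) (hr : 0 < r)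
    (c : ℕ → Fin r → ℕ) (hinit : 0 < ∑ i, c 0 i)
    (hstep : ∀ n, ∃ j : Fin r,
      (∀ i, c n j ≤ c n i) ∧ (∀ i, c n i = c n j → j ≤ i) ∧
      c (n + 1) = Function.update (c n) j (c n j + 1))
    (q : ℕ → Fin r → ℝ)
    (hq : ∀ n i, q n i = (c n i : ℝ) / ((∑ i', c n i' : ℕ) : ℝ)) :
    (∀ i, Tendsto (fun n => q n i) atTop (nhds (1 / (r : ℝ)))) ∧
    Tendsto (fun n =>
        Finset.univ.sup' ⟨⟨0, hr⟩, Finset.mem_univ _⟩ (q n) -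
        Finset.univ.inf' ⟨⟨0, hr⟩, Finset.mem_univ _⟩ (q n))
      atTop (nhds 0) := by
  have hne : (Finset.univ : Finset (Fin r)).Nonempty := ⟨⟨0, hr⟩, mem_univ _⟩
  set T : ℕ → ℕ := fun n => ∑ i, c n i with hTdef
  set m : ℕ → ℕ := fun n => univ.inf' hne (c n) with hmdef
  set S : ℕ := univ.sup' hne (c 0) with hSdef
  -- total count grows by one each step
  have hTsucc : ∀ n, T (n + 1) = T n + 1 := by
    intro n
    obtain ⟨j, hj1, _, hj3⟩ := hstep n
    simp only [hTdef, hj3]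
    rw [Finset.sum_update_of_mem (mem_univ j), Finset.sdiff_singleton_eq_erase,
      ← Finset.add_sum_erase _ _ (mem_univ j)]
    ring
  have hTn : ∀ n, T n = T 0 + n := by
    intro n
    induction n with
    | zero => rfl
    | succ n ih => rw [hTsucc, ih]; ring
  -- pointwise monotonicity
  have hcmono : ∀ n i, c n i ≤ c (n + 1) i := by
    intro n i
    obtain ⟨j, hj1, _, hj3⟩ := hstep n
    rw [hj3]
    by_cases h : i = j
    · subst h; simp
    · rw [Function.update_of_ne h]
  have hmmono : ∀ n, m n ≤ m (n + 1) := by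
    intro n
    apply Finset.le_inf'
    intro i _
    exact le_trans (Finset.inf'_le _ (mem_univ i)) (hcmono n i)
  -- key bound: c n i ≤ max S (m n + 1)
  have hkey : ∀ n i, c n i ≤ max S (m n + 1) := by
    intro n
    induction n with
    | zero => intro i; exact le_max_of_le_left (Finset.le_sup' _ (mem_univ i))
    | succ n ih =>
      intro i
      obtain ⟨j, hj1, _, hj3⟩ := hstep n
      have hjm : c n j = m n :=
        le_antisymm (Finset.le_inf' _ _ fun i _ => hj1 i) (Finset.inf'_le _ (mem_univ j))
      rw [hj3]
      by_cases h : i = j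
      · subst h
        rw [Function.update_self, hjm]
        exact le_max_of_le_right (Nat.succ_le_succ (hmmono n))
      · rw [Function.update_of_ne h]
        exact le_trans (ih i) (max_le_max le_rfl (by have := hmmono n; omega))
  have hub : ∀ n i, c n i ≤ m n + (S + 1) := by
    intro n i
    refine le_trans (hkey n i) (max_le ?_ ?_) <;> omega
  have hdiff : ∀ n i i', (c n i : ℝ) - c n i' ≤ (S + 1 : ℕ) := by
    intro n i i'
    have h1 := hub n i
    have h2 : m n ≤ c n i' := Finset.inf'_le _ (mem_univ i')
    have : c n i ≤ c n i' + (S + 1) := by omega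
    have := (Nat.cast_le (α := ℝ)).mpr this
    push_cast at this ⊢
    linarith
  have hTpos : ∀ n, (0 : ℝ) < (T n : ℝ) := by
    intro n
    have h0 : 0 < T 0 := hinit
    have : 0 < T n := by rw [hTn]; omega
    exact_mod_cast this
  have hrpos : (0 : ℝ) < r := by exact_mod_cast hr
  -- key estimate
  have key : ∀ n i, |q n i - 1 / (r : ℝ)| ≤ (S + 1 : ℕ) / (T n : ℝ) := by
    intro n i
    rw [hq]
    rw [div_sub_div _ _ (ne_of_gt (hTpos n)) (ne_of_gt hrpos), abs_div,
      abs_of_pos (mul_pos (hTpos n) hrpos)]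
    have hsum : (c n i : ℝ) * r - (T n : ℝ) * 1 = ∑ i', ((c n i : ℝ) - c n i') := by
      rw [Finset.sum_sub_distrib, Finset.sum_const]
      simp only [hTdef, Nat.cast_sum, card_univ, Fintype.card_fin]
      push_cast
      ring
    have hnum : |(c n i : ℝ) * r - (T n : ℝ) * 1| ≤ ((S + 1 : ℕ) : ℝ) * r := by
      rw [hsum]
      refine le_trans (Finset.abs_sum_le_sum_abs _ _) ?_
      have hb : ∀ i' ∈ (univ : Finset (Fin r)), |(c n i : ℝ) - c n i'| ≤ ((S + 1 : ℕ) : ℝ) := by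
        intro i' _
        rw [abs_le]
        constructor
        · have := hdiff n i' i; linarith
        · exact hdiff n i i'
      refine le_trans (Finset.sum_le_sum hb) ?_
      rw [Finset.sum_const, card_univ, Fintype.card_fin, nsmul_eq_mul]
      ring_nf
      exact le_rfl
    calc |(c n i : ℝ) * r - (T n : ℝ) * 1| / ((T n : ℝ) * r)
        ≤ (((S + 1 : ℕ) : ℝ) * r) / ((T n : ℝ) * r) := by
          exact (div_le_div_iff_of_pos_right (mul_pos (hTpos n) hrpos)).mpr hnum
      _ = ((S + 1 : ℕ) : ℝ) / (T n : ℝ) := by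
          rw [mul_div_mul_right _ _ (ne_of_gt hrpos)]
  -- the bound tends to zero
  have hg : Tendsto (fun n : ℕ => ((S + 1 : ℕ) : ℝ) / (T n : ℝ)) atTop (nhds 0) := by
    have h0 : Tendsto T atTop atTop :=
      tendsto_atTop_mono (fun n => by have := hTn n; simp only [id_eq]; omega) tendsto_id
    have h1 : Tendsto (fun n : ℕ => ((T n : ℕ) : ℝ)) atTop atTop :=
      tendsto_natCast_atTop_atTop.comp h0
    exact Tendsto.div_atTop tendsto_const_nhds h1
  have part1 : ∀ i, Tendsto (fun n => q n i) atTop (nhds (1 / (r : ℝ))) := by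
    intro i
    have h0 : Tendsto (fun n => q n i - 1 / (r : ℝ)) atTop (nhds 0) := by
      apply squeeze_zero_norm (fun n => key n i) hg
    have := h0.add_const (1 / (r : ℝ))
    simpa using this
  refine ⟨part1, ?_⟩
  -- second part
  have hq_diff : ∀ n i i', q n i - q n i' ≤ ((S + 1 : ℕ) : ℝ) / (T n : ℝ) := by
    intro n i i'
    rw [hq, hq, div_sub_div_same]
    exact (div_le_div_iff_of_pos_right (hTpos n)).mpr (hdiff n i i')
  have hband : ∀ n, univ.sup' hne (q n) - univ.inf' hne (q n) ≤ ((S + 1 : ℕ) : ℝ) / (T n : ℝ) := by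
    intro n
    obtain ⟨i0, _, h0⟩ := Finset.exists_mem_eq_sup' hne (q n)
    obtain ⟨i1, _, h1⟩ := Finset.exists_mem_eq_inf' hne (q n)
    rw [h0, h1]
    exact hq_diff n i0 i1
  have hnonneg : ∀ n, 0 ≤ univ.sup' hne (q n) - univ.inf' hne (q n) := by
    intro n
    have : univ.inf' hne (q n) ≤ univ.sup' hne (q n) :=
      le_trans (Finset.inf'_le _ (mem_univ (⟨0, hr⟩ : Fin r)))
        (Finset.le_sup' _ (mem_univ (⟨0, hr⟩ : Fin r)))
    linarith
  exact squeeze_zero hnonneg hband hg
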